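/- arXiv:2108.05328 — 4 statements merged into one kernel-verified Lean document; each statement's English description precedes it below -/
import Mathlib

section
/- Let n ≥ 1 and let w : Fin n → FreeGroup (Fin n) be a family of elements of the free group on n generators whose images under the abelianization homomorphism F_n → ℤ^n form a ℤ-basis of ℤ^n. Then the submonoid of F_n generated by w_1, …, w_n is a free monoid of rank n; equivalently, the unique monoid homomorphism from the free monoid on n generators to F_n sending the i-th generator to w_i is injective (and hence is an isomorphism onto the submonoid generated by the w_i). -/
/-- The abelianization homomorphism `F_n → ℤ^n`, sending the `i`-th free generator to the
`i`-th standard basis vector of `ℤ^n` (written multiplicatively). -/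
noncomputable def freeGroupAbelianization (n : ℕ) :
    FreeGroup (Fin n) →* Multiplicative (Fin n → ℤ) :=
  FreeGroup.lift fun i => Multiplicative.ofAdd (Pi.single i 1)

/-!
Let `φ : F_n → F_n` send the `i`-th generator to `w i`. Its image `H` is free
(Nielsen–Schreier) and maps onto `ℤ^n` under abelianization, so `H` has rank at least `n`.
Hence for every finite group `F` there are at least as many homomorphisms `H → F` as `F_n → F`;
precomposition with the surjection `F_n → H` is injective, hence bijective, so every
homomorphism from `F_n` to a finite group factors through `φ`. Free groups are residually
finite (a reduced word of length `k ≥ 1` acts nontrivially in a suitable permutation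
representation on `{0, …, k}`), so `φ` is injective. Finally the free monoid embeds into the
free group, since positive words are reduced.
-/

open Function Cardinal

universe u

theorem Equiv.Perm.exists_apply_eq_of_injective {X J : Type*} [Finite X] {x y : J → X}
    (hx : Injective x) (hy : Injective y) : ∃ σ : Perm X, ∀ j, σ (x j) = y j := by
  classical
  let e : Set.range x ≃ Set.range y :=
    (Equiv.ofInjective x hx).symm.trans (Equiv.ofInjective y hy)
  refine ⟨e.extendSubtype, fun j => ?_⟩
  rw [Equiv.extendSubtype_apply_of_mem e (x j) ⟨j, rfl⟩]
  simp [e]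

theorem Equiv.Perm.list_prod_apply_eq_of_forall_getElem_apply {X : Type*} (l : List (Perm X))
    (f : ℕ → X) (h : ∀ (i : ℕ) (hi : i < l.length), l[i] (f (i + 1)) = f i) :
    l.prod (f l.length) = f 0 := by
  induction l generalizing f with
  | nil => rfl
  | cons c l ih =>
    rw [List.prod_cons, Perm.mul_apply, List.length_cons,
      ih (fun i => f (i + 1)) fun i hi => h (i + 1) (by simpa using hi)]
    exact h 0 (by simp)

namespace FreeGroup

variable {α : Type*} {L : List (α × Bool)}

theorem IsReduced.snd_eq_of_fst_eq (hL : IsReduced L) {i : ℕ} (hi : i + 1 < L.length)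
    (h : L[i].1 = L[i + 1].1) : L[i].2 = L[i + 1].2 :=
  List.isChain_iff_getElem.mp hL i hi h

/-- The `t`-th letter of `L` is read as an edge between the points `t` and `t + 1`; `c` selects
which endpoint an occurrence of `a±¹` is sent to. -/
theorem IsReduced.injective_endpoint (hL : IsReduced L) (a : α) (c : Bool) :
    Injective fun t : {t : Fin L.length // L[t].1 = a} =>
      (⟨t.1 + (L[t.1].2 ^^ c).toNat, by have := Bool.toNat_le (L[t.1].2 ^^ c); omega⟩ :
        Fin (L.length + 1)) := by
  rintro ⟨⟨t, ht⟩, hta⟩ ⟨⟨s, hs⟩, hsa⟩ hts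
  simp only [Fin.mk.injEq, Fin.getElem_fin] at hts hta hsa
  have := Bool.toNat_le (L[t].2 ^^ c)
  have := Bool.toNat_le (L[s].2 ^^ c)
  suffices t = s by subst this; rfl
  by_contra hne
  rcases (by omega : s = t + 1 ∨ t = s + 1) with rfl | rfl
  · rw [hL.snd_eq_of_fst_eq hs (hta.trans hsa.symm)] at hts
    omega
  · rw [hL.snd_eq_of_fst_eq ht (hsa.trans hta.symm)] at hts
    omega

/-- Each `σ a` moves `t + 1` to `t` along every occurrence `t` of `a±¹` in the reduced word of
`g`, so `π g` walks the point `g.toWord.length` down to `0`. -/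
theorem exists_monoidHom_perm_apply_ne_one [DecidableEq α] {g : FreeGroup α} (hg : g ≠ 1) :
    ∃ π : FreeGroup α →* Equiv.Perm (Fin (g.toWord.length + 1)), π g ≠ 1 := by
  choose σ hσ using fun a => Equiv.Perm.exists_apply_eq_of_injective
    (isReduced_toWord (x := g).injective_endpoint a false)
    (isReduced_toWord (x := g).injective_endpoint a true)
  refine ⟨lift σ, fun h => ?_⟩
  have hprod : (g.toWord.map fun x => cond x.2 (σ x.1) (σ x.1)⁻¹).prod = 1 := by
    rw [← lift_mk, mk_toWord, h]
  have walk := Equiv.Perm.list_prod_apply_eq_of_forall_getElem_apply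
    (g.toWord.map fun x => cond x.2 (σ x.1) (σ x.1)⁻¹) (Fin.ofNat (g.toWord.length + 1)) ?_
  · rw [hprod, List.length_map, Equiv.Perm.one_apply] at walk
    have hne : g.toWord ≠ [] := by simpa using hg
    simp [Fin.ext_iff, hne] at walk
  · intro i hi
    simp only [List.length_map] at hi
    have hi' := hσ g.toWord[i].1 ⟨⟨i, hi⟩, rfl⟩
    simp only [Fin.getElem_fin, Bool.xor_false, Bool.xor_true] at hi'
    have hi₀ : Fin.ofNat (g.toWord.length + 1) i = ⟨i, by omega⟩ :=
      Fin.ext (Nat.mod_eq_of_lt (by omega))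
    have hi₁ : Fin.ofNat (g.toWord.length + 1) (i + 1) = ⟨i + 1, by omega⟩ :=
      Fin.ext (Nat.mod_eq_of_lt (by omega))
    cases hb : g.toWord[i].2
    · simp only [List.getElem_map, hb, cond_false, hi₀, hi₁] at hi' ⊢
      exact Equiv.Perm.inv_eq_iff_eq.mpr hi'.symm
    · simp only [List.getElem_map, hb, cond_true, hi₀, hi₁] at hi' ⊢
      exact hi'

instance : Group.ResiduallyFinite (FreeGroup α) := by
  classical
  refine Group.residuallyFinite_of_forall_exists_finite_monoidHom fun g hg => ?_
  obtain ⟨π, hπ⟩ := exists_monoidHom_perm_apply_ne_one hg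
  exact ⟨_, _, inferInstance, π, hπ⟩

end FreeGroup

namespace MonoidHom

theorem injective_of_forall_exists_comp_eq {G : Type u} {K : Type*} [Group G] [Group K]
    [Group.ResiduallyFinite G] (φ : G →* K)
    (h : ∀ (F : Type u) [Group F] [Finite F] (χ : G →* F),
      ∃ ψ : K →* F, ψ.comp φ = χ) :
    Injective φ := by
  refine (injective_iff_map_eq_one φ).mpr fun g hg => ?_
  by_contra hne
  obtain ⟨N, hN⟩ := Group.exists_finiteIndexNormalSubgroup_notMem g hne
  obtain ⟨ψ, hψ⟩ := h _ (QuotientGroup.mk' N.toSubgroup)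
  apply hN
  rw [← FiniteIndexNormalSubgroup.mem_toSubgroup_iff, ← QuotientGroup.eq_one_iff,
    ← QuotientGroup.mk'_apply, ← hψ, comp_apply, hg, map_one]

theorem exists_comp_eq_of_surjective_of_mk_le {G K F : Type u} [Group G] [Group K] [Group F]
    [Finite (G →* F)] {φ : G →* K} (hφ : Surjective φ) (hcard : #(G →* F) ≤ #(K →* F))
    (χ : G →* F) : ∃ ψ : K →* F, ψ.comp φ = χ := by
  have hinj : Injective fun ψ : K →* F => ψ.comp φ := fun _ _ => (cancel_right hφ).mp
  have : Finite (K →* F) := Finite.of_injective _ hinj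
  exact (hinj.bijective_of_nat_card_le (toNat_le_toNat hcard (lt_aleph0_of_finite _))).2 χ

theorem surjective_of_span_eq_top {G ι M : Type*} [Group G] [AddCommGroup M]
    (χ : G →* Multiplicative M) (v : ι → G)
    (hv : Submodule.span ℤ (Set.range fun i => (χ (v i)).toAdd) = ⊤) : Surjective χ := by
  have key : ∀ m ∈ Submodule.span ℤ (Set.range fun i => (χ (v i)).toAdd),
      Multiplicative.ofAdd m ∈ χ.range := by
    intro m hm
    induction hm using Submodule.span_induction with
    | mem x hx =>
      obtain ⟨i, rfl⟩ := hx
      exact ⟨v i, rfl⟩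
    | zero => exact one_mem _
    | add x y _ _ hx hy => exact mul_mem hx hy
    | smul k x _ hx => exact zpow_mem hx k
  exact fun m => key m.toAdd (hv ▸ Submodule.mem_top)

end MonoidHom

namespace FreeGroup

theorem mk_monoidHom (ι F : Type u) [Group F] : #(FreeGroup ι →* F) = #F ^ #ι := by
  rw [power_def, mk_congr FreeGroup.lift.symm]

theorem injective_of_surjective_of_mk_le {ι κ : Type u} [Finite ι]
    {f : FreeGroup ι →* FreeGroup κ} (hf : Surjective f) (h : #ι ≤ #κ) : Injective f :=
  f.injective_of_forall_exists_comp_eq fun F _ _ =>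
    have : Finite (FreeGroup ι →* F) := Finite.of_equiv _ FreeGroup.lift
    MonoidHom.exists_comp_eq_of_surjective_of_mk_le hf <| by
      rw [mk_monoidHom, mk_monoidHom]
      exact power_le_power_left (mk_ne_zero F) h

theorem rank_le_mk_of_surjective {ι M : Type u} [AddCommGroup M]
    {χ : FreeGroup ι →* Multiplicative M} (hχ : Surjective χ) :
    Module.rank ℤ M ≤ #ι := by
  set S := Submodule.span ℤ (Set.range fun i => (χ (of i)).toAdd)
  have hmem : ∀ g, (χ g).toAdd ∈ S := by
    intro g
    induction g using FreeGroup.induction_on with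
    | C1 => simp
    | of i => exact Submodule.subset_span ⟨i, rfl⟩
    | inv_of i h => simpa using S.neg_mem h
    | mul x y hx hy => simpa using S.add_mem hx hy
  have hS : S = ⊤ := S.eq_top_iff'.mpr fun m => by
    obtain ⟨g, hg⟩ := hχ (Multiplicative.ofAdd m)
    simpa [hg] using hmem g
  calc Module.rank ℤ M = Module.rank ℤ S := by rw [hS, rank_top]
    _ ≤ #(Set.range fun i => (χ (of i)).toAdd) := rank_span_le _
    _ ≤ #ι := mk_range_le

theorem injective_of_mk_le_rank {ι G M : Type u} [Finite ι] [Group G] [IsFreeGroup G]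
    [AddCommGroup M] (φ : FreeGroup ι →* G) (χ : G →* Multiplicative M)
    (hχφ : Surjective (χ.comp φ)) (hrank : #ι ≤ Module.rank ℤ M) : Injective φ := by
  let H := φ.range
  let e : FreeGroup ι →* FreeGroup (IsFreeGroup.Generators H) :=
    (IsFreeGroup.toFreeGroup H).toMonoidHom.comp φ.rangeRestrict
  let χH : FreeGroup (IsFreeGroup.Generators H) →* Multiplicative M :=
    χ.comp (H.subtype.comp (IsFreeGroup.toFreeGroup H).symm.toMonoidHom)
  have hχH : Surjective χH := by
    refine Surjective.of_comp (g := e) ?_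
    convert hχφ using 1
    funext g
    simp [χH, e, φ.coe_rangeRestrict]
  have he : Injective e :=
    injective_of_surjective_of_mk_le
      ((IsFreeGroup.toFreeGroup H).surjective.comp φ.rangeRestrict_surjective)
      (hrank.trans (rank_le_mk_of_surjective hχH))
  exact MonoidHom.rangeRestrict_injective_iff.mp
    (show Injective (IsFreeGroup.toFreeGroup H ∘ φ.rangeRestrict) from he).of_comp

theorem freeMonoidLift_of_injective {α : Type*} :
    Injective (FreeMonoid.lift (of : α → FreeGroup α)) := by
  classical
  have hmk (l : FreeMonoid α) : FreeMonoid.lift of l = mk (l.toList.map fun a => (a, true)) := by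
    rw [FreeMonoid.lift_apply, ← MonoidHom.id_apply (FreeGroup α) (mk _), ← lift_of_eq_id,
      lift_mk]
    simp [Function.comp_def]
  have hred (l : List α) : IsReduced (l.map fun a => (a, true)) :=
    List.isChain_iff_getElem.mpr fun _ _ _ => by simp
  intro l l' h
  rw [hmk, hmk, ← toWord_inj, toWord_mk, toWord_mk, (hred _).reduce_eq, (hred _).reduce_eq] at h
  exact FreeMonoid.toList.injective
    (List.map_injective_iff.mpr (fun _ _ hab => (Prod.mk.inj hab).1) h)

end FreeGroup

theorem freeMonoid_lift_injective_of_abelianization_basis_general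
    (n : ℕ) (w : Fin n → FreeGroup (Fin n))
    (hbasis : ∃ B : Module.Basis (Fin n) ℤ (Fin n → ℤ),
      ∀ i, B i = Multiplicative.toAdd (freeGroupAbelianization n (w i))) :
    Function.Injective (FreeMonoid.lift w) := by
  obtain ⟨B, hB⟩ := hbasis
  have hφ : Injective (FreeGroup.lift w) :=
    FreeGroup.injective_of_mk_le_rank _ (freeGroupAbelianization n)
      (MonoidHom.surjective_of_span_eq_top _ FreeGroup.of (by simp [← hB])) (by simp)
  have hw : FreeMonoid.lift w = (FreeGroup.lift w).comp (FreeMonoid.lift FreeGroup.of) :=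
    FreeMonoid.hom_eq fun i => by simp
  rw [hw, MonoidHom.coe_comp]
  exact hφ.comp FreeGroup.freeMonoidLift_of_injective

/-- Lemma 2.2.6: if `w : Fin n → FreeGroup (Fin n)` is a family whose images under the
abelianization homomorphism `F_n → ℤ^n` form a ℤ-basis of `ℤ^n`, then the submonoid of `F_n`
generated by the `w i` is a free monoid of rank `n`: the unique monoid homomorphism
`FreeMonoid (Fin n) →* FreeGroup (Fin n)` sending the `i`-th generator to `w i` is injective. -/
theorem freeMonoid_lift_injective_of_abelianization_basis
    (n : ℕ) (hn : 1 ≤ n) (w : Fin n → FreeGroup (Fin n))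
    (hbasis : ∃ B : Module.Basis (Fin n) ℤ (Fin n → ℤ),
      ∀ i, B i = Multiplicative.toAdd (freeGroupAbelianization n (w i))) :
    Function.Injective (FreeMonoid.lift w) :=
  freeMonoid_lift_injective_of_abelianization_basis_general n w hbasis
end

section
/- Let L be a finite meet-semilattice, A an associative unital ring, and e : L → A a function satisfying e(a)·e(b) = e(a ⊓ b) for all a, b ∈ L (in particular each e(a) is an idempotent). Then there exists a unique family f : L → A such that f(a)·f(b) = 0 whenever a ≠ b and such that for every a ∈ L one has e(a) = Σ_{b ≤ a} f(b); moreover each f(a) is an idempotent. -/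
/-!
The reduced idempotents are the Möbius inversion of `e`, defined recursively by
`f a = e a - ∑_{b < a} f b`; uniqueness is injectivity of summation over lower sets, by
well-founded induction. The key identity is `e c * f a = [a ≤ c] f a`: by induction on `a`, both
sides differ from `e c * e a = e (c ⊓ a) = ∑_{b ≤ a, b ≤ c} f b` by the same sum over `b < a`.
Its mirror image `f a * e c = [a ≤ c] f a` comes from the opposite ring. Orthogonality of
`f a` and `f b` follows by inserting `e a` or `e b` between them, and idempotence by multiplying
`f a = e a - ∑_{b < a} f b` by `f a`.
-/

open Finset

section MoebiusInversion

variable {L : Type*} [PartialOrder L] [Fintype L] [DecidableRel ((· ≤ ·) : L → L → Prop)]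

lemma sum_filter_le_eq_add_sum_erase [DecidableEq L] {M : Type*} [AddCommMonoid M]
    (f : L → M) (a : L) :
    ∑ b ∈ univ.filter (· ≤ a), f b = f a + ∑ b ∈ (univ.filter (· ≤ a)).erase a, f b :=
  (add_sum_erase _ f (by simp)).symm

lemma lt_of_mem_erase_filter_le [DecidableEq L] {a b : L}
    (hb : b ∈ (univ.filter (· ≤ a)).erase a) : b < a := by
  simp only [mem_erase, mem_filter, mem_univ, true_and] at hb
  exact lt_of_le_of_ne hb.2 hb.1

lemma eq_of_forall_sum_filter_le_eq {M : Type*} [AddCancelCommMonoid M] {f g : L → M}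
    (h : ∀ a, ∑ b ∈ univ.filter (· ≤ a), f b = ∑ b ∈ univ.filter (· ≤ a), g b) : f = g := by
  classical
  funext a
  induction a using WellFoundedLT.induction with
  | ind a ih =>
    have h_lt : ∑ b ∈ (univ.filter (· ≤ a)).erase a, f b
        = ∑ b ∈ (univ.filter (· ≤ a)).erase a, g b :=
      sum_congr rfl fun b hb => ih b (lt_of_mem_erase_filter_le hb)
    have := h a
    rwa [sum_filter_le_eq_add_sum_erase, sum_filter_le_eq_add_sum_erase g, h_lt,
      add_left_inj] at this

attribute [local instance] WellFoundedLT.toWellFoundedRelation in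
noncomputable def moebiusInv [DecidableEq L] {M : Type*} [AddCommGroup M] (e : L → M) (a : L) :
    M :=
  e a - ∑ b ∈ ((univ.filter (· ≤ a)).erase a).attach, moebiusInv e b
termination_by a
decreasing_by exact lt_of_mem_erase_filter_le b.2

lemma sum_filter_le_moebiusInv [DecidableEq L] {M : Type*} [AddCommGroup M] (e : L → M) (a : L) :
    ∑ b ∈ univ.filter (· ≤ a), moebiusInv e b = e a := by
  rw [sum_filter_le_eq_add_sum_erase, moebiusInv, sum_attach, sub_add_cancel]

end MoebiusInversion

section ReducedIdempotents

variable {L : Type*} [SemilatticeInf L] [Fintype L] [DecidableRel ((· ≤ ·) : L → L → Prop)]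
  {A : Type*} [Ring A] {e f : L → A}

lemma mul_eq_ite_of_sum_filter_le (he : ∀ a b, e a * e b = e (a ⊓ b))
    (hf : ∀ a, e a = ∑ b ∈ univ.filter (· ≤ a), f b) (c a : L) :
    e c * f a = if a ≤ c then f a else 0 := by
  classical
  induction a using WellFoundedLT.induction with
  | ind a ih =>
    set g : L → A := fun b => if b ≤ c then f b else 0
    have h_lt : ∑ b ∈ (univ.filter (· ≤ a)).erase a, e c * f b
        = ∑ b ∈ (univ.filter (· ≤ a)).erase a, g b :=
      sum_congr rfl fun b hb => ih b (lt_of_mem_erase_filter_le hb)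
    refine add_right_cancel (b := ∑ b ∈ (univ.filter (· ≤ a)).erase a, g b) ?_
    calc e c * f a + ∑ b ∈ (univ.filter (· ≤ a)).erase a, g b
        = e c * e a := by
          rw [← h_lt, ← mul_sum, ← mul_add, ← sum_filter_le_eq_add_sum_erase, hf a]
      _ = ∑ b ∈ univ.filter (· ≤ a), g b := by
          rw [he, hf, sum_filter, sum_filter]
          exact sum_congr rfl fun b _ => by simp only [g, le_inf_iff, ← ite_and, and_comm]
      _ = g a + ∑ b ∈ (univ.filter (· ≤ a)).erase a, g b := sum_filter_le_eq_add_sum_erase g a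

lemma mul_eq_ite_of_sum_filter_le' (he : ∀ a b, e a * e b = e (a ⊓ b))
    (hf : ∀ a, e a = ∑ b ∈ univ.filter (· ≤ a), f b) (c a : L) :
    f a * e c = if a ≤ c then f a else 0 := by
  have hop := mul_eq_ite_of_sum_filter_le (e := fun a => MulOpposite.op (e a))
    (f := fun a => MulOpposite.op (f a))
    (fun a b => by rw [← MulOpposite.op_mul, he, inf_comm])
    (fun a => by rw [hf, Finset.op_sum]) c a
  apply MulOpposite.op_injective
  rw [MulOpposite.op_mul, hop]
  split_ifs <;> rfl

lemma mul_eq_zero_of_sum_filter_le (he : ∀ a b, e a * e b = e (a ⊓ b))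
    (hf : ∀ a, e a = ∑ b ∈ univ.filter (· ≤ a), f b) {a b : L} (hab : a ≠ b) :
    f a * f b = 0 := by
  by_cases hle : a ≤ b
  · have hba : ¬ b ≤ a := fun h => hab (le_antisymm hle h)
    calc f a * f b = f a * e a * f b := by
          rw [mul_eq_ite_of_sum_filter_le' he hf, if_pos le_rfl]
      _ = 0 := by rw [mul_assoc, mul_eq_ite_of_sum_filter_le he hf, if_neg hba, mul_zero]
  · calc f a * f b = f a * (e b * f b) := by
          rw [mul_eq_ite_of_sum_filter_le he hf, if_pos le_rfl]
      _ = 0 := by rw [← mul_assoc, mul_eq_ite_of_sum_filter_le' he hf, if_neg hle, zero_mul]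

lemma isIdempotentElem_of_sum_filter_le (he : ∀ a b, e a * e b = e (a ⊓ b))
    (hf : ∀ a, e a = ∑ b ∈ univ.filter (· ≤ a), f b) (a : L) :
    IsIdempotentElem (f a) := by
  classical
  have hfa : f a = e a - ∑ b ∈ (univ.filter (· ≤ a)).erase a, f b := by
    rw [hf, sum_filter_le_eq_add_sum_erase, add_sub_cancel_right]
  have h_orth : ∑ b ∈ (univ.filter (· ≤ a)).erase a, f a * f b = 0 :=
    sum_eq_zero fun b hb => mul_eq_zero_of_sum_filter_le he hf (lt_of_mem_erase_filter_le hb).ne'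
  calc f a * f a = f a * e a - ∑ b ∈ (univ.filter (· ≤ a)).erase a, f a * f b := by
        nth_rewrite 2 [hfa]
        rw [mul_sub, mul_sum]
    _ = f a := by rw [mul_eq_ite_of_sum_filter_le' he hf, if_pos le_rfl, h_orth, sub_zero]

end ReducedIdempotents

/-- Lemma-Definition 4.2.7 (abstract form): given a multiplicative-to-meet family of
idempotents `e : L → A` on a finite meet-semilattice (`e a * e b = e (a ⊓ b)`), there is a
unique family `f : L → A` of pairwise orthogonal elements with `e a = Σ_{b ≤ a} f b` for all
`a`; moreover each `f a` is an idempotent (the "reduced idempotents"). -/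
theorem reduced_idempotents_exist_unique
    (L : Type*) [SemilatticeInf L] [Fintype L]
    [DecidableEq L] [DecidableRel ((· ≤ ·) : L → L → Prop)]
    (A : Type*) [Ring A] (e : L → A)
    (he : ∀ a b : L, e a * e b = e (a ⊓ b)) :
    (∃! f : L → A, (∀ a b : L, a ≠ b → f a * f b = 0) ∧
        (∀ a : L, e a = ∑ b ∈ Finset.univ.filter (fun b => b ≤ a), f b)) ∧
      (∀ f : L → A,
        ((∀ a b : L, a ≠ b → f a * f b = 0) ∧
          (∀ a : L, e a = ∑ b ∈ Finset.univ.filter (fun b => b ≤ a), f b)) →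
        ∀ a : L, IsIdempotentElem (f a)) := by
  have h_inv : ∀ a, e a = ∑ b ∈ univ.filter (· ≤ a), moebiusInv e b :=
    fun a => (sum_filter_le_moebiusInv e a).symm
  refine ⟨⟨moebiusInv e, ⟨fun a b => mul_eq_zero_of_sum_filter_le he h_inv, h_inv⟩, ?_⟩,
    fun f ⟨_, hf⟩ => isIdempotentElem_of_sum_filter_le he hf⟩
  rintro f ⟨-, hf⟩
  exact eq_of_forall_sum_filter_le_eq fun a => by rw [← hf, ← h_inv]
end

section
/- Let r ≥ 2 and l ≥ 1. Let ρ : ℂ⟨z_{ij} : 1 ≤ i, j ≤ r⟩ → M_r(ℂ) be the ℂ-algebra homomorphism from the free associative unital ℂ-algebra on r² generators z_{ij} determined by ρ(z_{ij}) = E_{ij}, and let m₀ be the two-sided ideal generated by all the z_{ij}. Then the two-sided ideal generated by the kernel of ρ together with the set {fg − gf : f ∈ m₀, g ∈ m₀^l} is the whole algebra ℂ⟨z_{ij} : 1 ≤ i, j ≤ r⟩. -/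
/-- The ℂ-algebra homomorphism `ρ : ℂ⟨z_{ij}⟩ → M_r(ℂ)` sending `z_{ij}` to the elementary
matrix `E_{ij}` (Example 2.1.7(3)). -/
noncomputable def matrixPointHom (r : ℕ) :
    FreeAlgebra ℂ (Fin r × Fin r) →ₐ[ℂ] Matrix (Fin r) (Fin r) ℂ :=
  FreeAlgebra.lift ℂ fun p => Matrix.single p.1 p.2 1

/-- The two-sided ideal `m₀ = (z_{ij} : 1 ≤ i,j ≤ r)` of `ℂ⟨z_{ij}⟩`. -/
noncomputable def augIdeal (r : ℕ) : TwoSidedIdeal (FreeAlgebra ℂ (Fin r × Fin r)) :=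
  TwoSidedIdeal.span (Set.range (FreeAlgebra.ι ℂ))

/-- The `l`-th power `m₀^l` of the two-sided ideal `m₀`: the two-sided ideal generated by
products of `l` elements of `m₀`. -/
noncomputable def augIdealPow (r l : ℕ) : TwoSidedIdeal (FreeAlgebra ℂ (Fin r × Fin r)) :=
  TwoSidedIdeal.span {x | ∃ f : Fin l → FreeAlgebra ℂ (Fin r × Fin r),
    (∀ i, f i ∈ augIdeal r) ∧ x = (List.ofFn f).prod}

/-!
`M_r(ℂ)` is simple, explicitly: `∑ᵢ E_{ia} M E_{bi} = M_{ab} • 1`. Hence a two-sided ideal of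
`ℂ⟨z_{ij}⟩` containing `Ker ρ` is everything as soon as it contains one `x` with `ρ x ≠ 0`:
for an entry `ρ(x)_{ab} ≠ 0`, a scalar multiple of `∑ᵢ z_{ia} x z_{bi}` is `1` modulo `Ker ρ`.
For `x` take the commutator `[z₁₂, z₁₁^l] ∈ [m₀, m₀^l]`, which maps to `[E₁₂, E₁₁] = -E₁₂`.
-/

open FreeAlgebra

theorem Matrix.sum_single_mul_mul_single {n α : Type*} [Fintype n] [DecidableEq n] [Semiring α]
    (M : Matrix n n α) (a b : n) :
    ∑ i, single i a 1 * M * single b i 1 = M a b • (1 : Matrix n n α) := by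
  simp_rw [single_mul_mul_single, one_mul, mul_one, sum_single_eq_diagonal,
    smul_one_eq_diagonal]

theorem TwoSidedIdeal.eq_top_of_ker_le_of_map_eq_one {A B F : Type*} [Ring A] [Ring B]
    [FunLike F A B] [RingHomClass F A B] (f : F) (J : TwoSidedIdeal A)
    (hker : ∀ x, f x = 0 → x ∈ J) {x : A} (hx : x ∈ J) (hfx : f x = 1) : J = ⊤ := by
  rw [← J.one_mem_iff, ← sub_add_cancel 1 x]
  exact J.add_mem (hker _ (by rw [map_sub, map_one, hfx, sub_self])) hx

theorem TwoSidedIdeal.smul_mem {R A : Type*} [CommSemiring R] [Ring A] [Algebra R A]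
    (J : TwoSidedIdeal A) (c : R) {x : A} (hx : x ∈ J) : c • x ∈ J := by
  rw [Algebra.smul_def]
  exact J.mul_mem_left _ _ hx

section

variable (r : ℕ)

theorem matrixPointHom_ι (p : Fin r × Fin r) :
    matrixPointHom r (ι ℂ p) = Matrix.single p.1 p.2 1 :=
  lift_ι_apply _ _

theorem matrixPointHom_sum_ι_mul_mul_ι (x : FreeAlgebra ℂ (Fin r × Fin r)) (a b : Fin r) :
    matrixPointHom r (∑ i, ι ℂ (i, a) * x * ι ℂ (b, i)) = matrixPointHom r x a b • 1 := by
  simp only [map_sum, map_mul, matrixPointHom_ι, Matrix.sum_single_mul_mul_single]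

theorem eq_top_of_ker_le_of_matrixPointHom_ne_zero
    (J : TwoSidedIdeal (FreeAlgebra ℂ (Fin r × Fin r)))
    (hker : ∀ x, matrixPointHom r x = 0 → x ∈ J) {x : FreeAlgebra ℂ (Fin r × Fin r)}
    (hx : x ∈ J) (hρx : matrixPointHom r x ≠ 0) : J = ⊤ := by
  obtain ⟨a, b, hab⟩ : ∃ a b, matrixPointHom r x a b ≠ 0 := by
    by_contra! h
    exact hρx (Matrix.ext h)
  refine J.eq_top_of_ker_le_of_map_eq_one (matrixPointHom r) hker
    (x := (matrixPointHom r x a b)⁻¹ • ∑ i, ι ℂ (i, a) * x * ι ℂ (b, i)) ?_ ?_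
  · exact J.smul_mem _ (sum_mem fun i _ => J.mul_mem_right _ _ (J.mul_mem_left _ _ hx))
  · rw [map_smul, matrixPointHom_sum_ι_mul_mul_ι, smul_smul, inv_mul_cancel₀ hab, one_smul]

theorem ι_mem_augIdeal (p : Fin r × Fin r) : ι ℂ p ∈ augIdeal r :=
  TwoSidedIdeal.subset_span ⟨p, rfl⟩

theorem pow_mem_augIdealPow {x : FreeAlgebra ℂ (Fin r × Fin r)} (hx : x ∈ augIdeal r) (l : ℕ) :
    x ^ l ∈ augIdealPow r l :=
  TwoSidedIdeal.subset_span ⟨fun _ => x, fun _ => hx, by simp⟩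

theorem matrixPointHom_commutator_ι_pow {i j : Fin r} (hij : i ≠ j) {l : ℕ} (hl : 1 ≤ l) :
    matrixPointHom r (ι ℂ (i, j) * ι ℂ (i, i) ^ l - ι ℂ (i, i) ^ l * ι ℂ (i, j)) =
      -Matrix.single i j 1 := by
  have hidem : IsIdempotentElem (Matrix.single i i (1 : ℂ)) := by
    rw [IsIdempotentElem, Matrix.single_mul_single_same, mul_one]
  simp only [map_sub, map_mul, map_pow, matrixPointHom_ι, hidem.pow_eq (by omega : l ≠ 0),
    Matrix.single_mul_single_of_ne _ _ _ _ hij.symm, Matrix.single_mul_single_same, mul_one,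
    zero_sub]

end

/-- Example 2.1.7(3): the two-sided ideal generated by `Ker ρ` together with
`[m₀, m₀^l] = {fg - gf : f ∈ m₀, g ∈ m₀^l}` is the whole algebra, i.e. the Azumaya/matrix
point on `ncA^{r²}` has empty intersection with the master `l`-commutative subscheme. -/
theorem matrixPoint_disjoint_from_master_commutative (r l : ℕ) (hr : 2 ≤ r) (hl : 1 ≤ l) :
    TwoSidedIdeal.span ({x | matrixPointHom r x = 0} ∪
        {x | ∃ f g : FreeAlgebra ℂ (Fin r × Fin r),
          f ∈ augIdeal r ∧ g ∈ augIdealPow r l ∧ x = f * g - g * f}) = ⊤ := by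
  let i : Fin r := ⟨0, by omega⟩
  let j : Fin r := ⟨1, hr⟩
  have hij : i ≠ j := by simp [i, j, Fin.ext_iff]
  refine eq_top_of_ker_le_of_matrixPointHom_ne_zero r _
    (fun x hx => TwoSidedIdeal.subset_span (Or.inl hx))
    (TwoSidedIdeal.subset_span (Or.inr ⟨_, _, ι_mem_augIdeal r (i, j),
      pow_mem_augIdealPow r (ι_mem_augIdeal r (i, i)) l, rfl⟩)) ?_
  rw [matrixPointHom_commutator_ι_pow r hij hl, neg_ne_zero]
  intro h
  simpa using congr_fun (congr_fun h i) j
end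

section
/- Let n ≥ 1 and let ℂ[F_n] = MonoidAlgebra ℂ (FreeGroup (Fin n)) be the group algebra over ℂ of the free group on n generators. Then every unit of ℂ[F_n] is trivial: for every invertible element u of ℂ[F_n] there exist a nonzero scalar c ∈ ℂ^× and a group element g ∈ F_n such that u = c·g (i.e. u is the single-supported element MonoidAlgebra.single g c). Conversely, every element of this form is a unit. -/
namespace MagnusAux

variable {n : ℕ}

/-- Coefficient functions of noncommutative power series in `n` variables over `ℤ`. -/
def Cf (n : ℕ) := List (Fin n) → ℤ

namespace Cf

instance : Zero (Cf n) := ⟨fun _ => 0⟩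
instance : Add (Cf n) := ⟨fun f g w => f w + g w⟩
instance : Neg (Cf n) := ⟨fun f w => - f w⟩
instance : Sub (Cf n) := ⟨fun f g w => f w - g w⟩
instance : One (Cf n) := ⟨fun w => if w = [] then 1 else 0⟩
instance : Mul (Cf n) := ⟨fun f g w => ∑ s ∈ Finset.range (w.length + 1), f (w.take s) * g (w.drop s)⟩

lemma mul_def (f g : Cf n) (w : List (Fin n)) :
    (f * g) w = ∑ s ∈ Finset.range (w.length + 1), f (w.take s) * g (w.drop s) := rfl

lemma one_def (w : List (Fin n)) : (1 : Cf n) w = if w = [] then 1 else 0 := rfl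

lemma sub_def (f g : Cf n) (w : List (Fin n)) : (f - g) w = f w - g w := rfl

protected lemma one_mul (f : Cf n) : 1 * f = f := by
  funext w
  rw [mul_def]
  rw [Finset.sum_eq_single 0]
  · simp [one_def]
  · intro s hs hs0
    have hsw : s ≤ w.length := Nat.lt_succ_iff.mp (Finset.mem_range.mp hs)
    have : w.take s ≠ [] := by
      intro h
      have hl : min s w.length = 0 := by simpa using congrArg List.length h
      omega
    simp [one_def, this]
  · intro h; simp at h

protected lemma mul_one (f : Cf n) : f * 1 = f := by
  funext w
  rw [mul_def]
  rw [Finset.sum_eq_single w.length]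
  · simp [one_def]
  · intro s hs hs0
    have hsw : s ≤ w.length := Nat.lt_succ_iff.mp (Finset.mem_range.mp hs)
    have : w.drop s ≠ [] := by
      intro h
      have hl : w.length - s = 0 := by simpa using congrArg List.length h
      omega
    simp [one_def, this]
  · intro h; simp at h

protected lemma mul_assoc (f g h : Cf n) : f * g * h = f * (g * h) := by
  funext w
  have LHS : (f * g * h) w =
      ∑ p ∈ (Finset.range (w.length + 1)).sigma (fun t => Finset.range (t + 1)),
        f (w.take p.2) * g ((w.drop p.2).take (p.1 - p.2)) * h (w.drop p.1) := by
    rw [Finset.sum_sigma, mul_def]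
    refine Finset.sum_congr rfl fun t ht => ?_
    have htw : t ≤ w.length := Nat.lt_succ_iff.mp (Finset.mem_range.mp ht)
    rw [mul_def, Finset.sum_mul]
    have hlen : (w.take t).length = t := by simp [List.length_take]; omega
    rw [hlen]
    refine Finset.sum_congr rfl fun s hs => ?_
    have hst : s ≤ t := Nat.lt_succ_iff.mp (Finset.mem_range.mp hs)
    rw [List.take_take, min_eq_left hst, List.drop_take]
  have RHS : (f * (g * h)) w =
      ∑ p ∈ (Finset.range (w.length + 1)).sigma (fun s => Finset.range (w.length - s + 1)),
        f (w.take p.1) * g ((w.drop p.1).take p.2) * h ((w.drop p.1).drop p.2) := by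
    rw [Finset.sum_sigma, mul_def]
    refine Finset.sum_congr rfl fun s hs => ?_
    have hsw : s ≤ w.length := Nat.lt_succ_iff.mp (Finset.mem_range.mp hs)
    rw [mul_def, Finset.mul_sum]
    have hlen : (w.drop s).length = w.length - s := by simp
    rw [hlen]
    refine Finset.sum_congr rfl fun r hr => ?_
    rw [mul_assoc]
  rw [LHS, RHS]
  refine Finset.sum_nbij' (fun p => ⟨p.2, p.1 - p.2⟩) (fun p => ⟨p.1 + p.2, p.1⟩) ?_ ?_ ?_ ?_ ?_
  · rintro ⟨t, s⟩ hp
    simp only [Finset.mem_sigma, Finset.mem_range] at hp ⊢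
    omega
  · rintro ⟨s, r⟩ hp
    simp only [Finset.mem_sigma, Finset.mem_range] at hp ⊢
    omega
  · rintro ⟨t, s⟩ hp
    simp only [Finset.mem_sigma, Finset.mem_range] at hp
    simp only [Sigma.mk.inj_iff, heq_eq_eq]
    exact ⟨by omega, trivial⟩
  · rintro ⟨s, r⟩ hp
    simp only [Finset.mem_sigma, Finset.mem_range] at hp
    simp only [Sigma.mk.inj_iff, heq_eq_eq]
    exact ⟨trivial, by omega⟩
  · rintro ⟨t, s⟩ hp
    simp only [Finset.mem_sigma, Finset.mem_range] at hp
    have h1 : (w.drop s).drop (t - s) = w.drop t := by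
      rw [List.drop_drop]
      congr 1
      omega
    rw [h1]

instance : Monoid (Cf n) where
  one_mul := Cf.one_mul
  mul_one := Cf.mul_one
  mul_assoc := Cf.mul_assoc


lemma sum_range_eq_two (m : ℕ) (F : ℕ → ℤ) (a b : ℕ) (hab : a < b) (ha : a ≤ m) (hb : b ≤ m)
    (h0 : ∀ s, s ≤ m → s ≠ a → s ≠ b → F s = 0) :
    ∑ s ∈ Finset.range (m + 1), F s = F a + F b := by
  have hsub : ({a, b} : Finset ℕ) ⊆ Finset.range (m + 1) := by
    intro x hx
    simp only [Finset.mem_insert, Finset.mem_singleton] at hx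
    rcases hx with rfl | rfl <;> simp [Finset.mem_range] <;> omega
  rw [← Finset.sum_subset hsub]
  · rw [Finset.sum_pair hab.ne]
  · intro x hx hx2
    simp only [Finset.mem_insert, Finset.mem_singleton, not_or] at hx2
    exact h0 x (Nat.lt_succ_iff.mp (Finset.mem_range.mp hx)) hx2.1 hx2.2

end Cf

/-- `1 + t_i`. -/
def gf (i : Fin n) : Cf n := fun w => if w = [] ∨ w = [i] then 1 else 0

/-- `(1 + t_i)⁻¹ = 1 - t_i + t_i² - ⋯`. -/
def gb (i : Fin n) : Cf n := fun w => if w = List.replicate w.length i then (-1) ^ w.length else 0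

lemma gf_nil (i : Fin n) : gf i [] = 1 := rfl
lemma gb_nil (i : Fin n) : gb i [] = 1 := rfl

lemma gf_eq_zero {i : Fin n} {u : List (Fin n)} (h : 2 ≤ u.length) : gf i u = 0 := by
  have h1 : u ≠ [] := by intro e; rw [e] at h; simp at h
  have h2 : u ≠ [i] := by intro e; rw [e] at h; simp at h
  simp [gf, h1, h2]

lemma replicate_cons_iff {i a : Fin n} (w : List (Fin n)) :
    (a :: w = List.replicate (w.length + 1) i) ↔ (a = i ∧ w = List.replicate w.length i) := by
  rw [List.replicate_succ]
  constructor
  · intro h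
    injection h with h1 h2
    exact ⟨h1, h2⟩
  · rintro ⟨rfl, h⟩
    rw [← h]

lemma replicate_concat_iff {i c : Fin n} (w : List (Fin n)) :
    (w ++ [c] = List.replicate (w.length + 1) i) ↔ (c = i ∧ w = List.replicate w.length i) := by
  rw [List.replicate_succ']
  constructor
  · intro h
    have h2 := List.append_inj h (by simp)
    refine ⟨?_, h2.1⟩
    have := h2.2
    injection this with h3
  · rintro ⟨rfl, h⟩
    rw [← h]

lemma gb_cons {i a : Fin n} (w : List (Fin n)) :
    gb i (a :: w) = if a = i then -gb i w else 0 := by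
  show (if a :: w = List.replicate (a :: w).length i then ((-1 : ℤ)) ^ (a :: w).length else 0) = _
  rw [List.length_cons]
  simp only [replicate_cons_iff, pow_succ]
  by_cases ha : a = i
  · by_cases hw : w = List.replicate w.length i
    · rw [if_pos ⟨ha, hw⟩, if_pos ha]
      show _ = -(if w = List.replicate w.length i then ((-1:ℤ)) ^ w.length else 0)
      rw [if_pos hw]; ring
    · rw [if_neg (by tauto), if_pos ha]
      show (0:ℤ) = -(if w = List.replicate w.length i then ((-1:ℤ)) ^ w.length else 0)
      rw [if_neg hw]; ring
  · rw [if_neg (by tauto), if_neg ha]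

lemma gb_concat {i c : Fin n} (w : List (Fin n)) :
    gb i (w ++ [c]) = if c = i then -gb i w else 0 := by
  show (if w ++ [c] = List.replicate (w ++ [c]).length i then ((-1:ℤ)) ^ (w ++ [c]).length else 0) = _
  rw [List.length_append, List.length_singleton]
  simp only [replicate_concat_iff, pow_succ]
  by_cases hc : c = i
  · by_cases hw : w = List.replicate w.length i
    · rw [if_pos ⟨hc, hw⟩, if_pos hc]
      show _ = -(if w = List.replicate w.length i then ((-1:ℤ)) ^ w.length else 0)
      rw [if_pos hw]; ring
    · rw [if_neg (by tauto), if_pos hc]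
      show (0:ℤ) = -(if w = List.replicate w.length i then ((-1:ℤ)) ^ w.length else 0)
      rw [if_neg hw]; ring
  · rw [if_neg (by tauto), if_neg hc]

lemma gf_mul_gb (i : Fin n) : gf i * gb i = 1 := by
  funext w
  cases w with
  | nil =>
    show ∑ s ∈ Finset.range 1, _ = _
    simp [gf_nil, gb_nil, Cf.one_def]
  | cons a w' =>
    rw [Cf.mul_def]
    have hlen : (a :: w').length = w'.length + 1 := rfl
    rw [Cf.sum_range_eq_two _ _ 0 1 (by omega) (by omega) (by omega)]
    · have ht1 : (a :: w').take 1 = [a] := rfl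
      have hd1 : (a :: w').drop 1 = w' := rfl
      rw [List.take_zero, List.drop_zero, ht1, hd1, gf_nil, gb_cons]
      by_cases ha : a = i
      · subst ha
        have : gf a [a] = 1 := by simp [gf]
        simp [this, Cf.one_def]
      · have : gf i [a] = 0 := by simp [gf, ha]
        simp [this, ha, Cf.one_def]
    · intro s hs hs0 hs1
      have h2 : 2 ≤ s := by omega
      have : 2 ≤ ((a :: w').take s).length := by
        rw [List.length_take]
        rw [hlen]
        omega
      rw [gf_eq_zero this, zero_mul]

lemma gb_mul_gf (i : Fin n) : gb i * gf i = 1 := by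
  funext w
  induction w using List.reverseRecOn with
  | nil =>
    show ∑ s ∈ Finset.range 1, _ = _
    simp [gf_nil, gb_nil, Cf.one_def]
  | append_singleton w' c _ =>
    rw [Cf.mul_def]
    have hlen : (w' ++ [c]).length = w'.length + 1 := by simp
    rw [hlen]
    rw [Cf.sum_range_eq_two _ _ w'.length (w'.length + 1) (by omega) (by omega) (by omega)]
    · have ht : (w' ++ [c]).take w'.length = w' := by
        rw [List.take_left]
      have hd : (w' ++ [c]).drop w'.length = [c] := by
        rw [List.drop_left]
      have htf : (w' ++ [c]).take (w'.length + 1) = w' ++ [c] := by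
        rw [← hlen, List.take_length]
      have hdf : (w' ++ [c]).drop (w'.length + 1) = [] := by
        rw [← hlen, List.drop_length]
      rw [ht, hd, htf, hdf, gf_nil, gb_concat]
      by_cases hc : c = i
      · subst hc
        have : gf c [c] = 1 := by simp [gf]
        simp [this, Cf.one_def]
      · have : gf i [c] = 0 := by simp [gf, hc]
        simp [this, hc, Cf.one_def]
    · intro s hs hs0 hs1
      have : 2 ≤ ((w' ++ [c]).drop s).length := by
        rw [List.length_drop, hlen]
        omega
      rw [gf_eq_zero this, mul_zero]

/-- The Magnus unit `1 + t_i`. -/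
def U (i : Fin n) : (Cf n)ˣ := ⟨gf i, gb i, gf_mul_gb i, gb_mul_gf i⟩

/-- Series attached to a letter. -/
def gen (p : Fin n × Bool) : Cf n := cond p.2 (gf p.1) (gb p.1)

lemma gen_nil (p : Fin n × Bool) : gen p [] = 1 := by
  rcases p with ⟨i, b⟩; cases b <;> rfl

lemma gen_eq_zero {p : Fin n × Bool} {u : List (Fin n)}
    (h : u ≠ List.replicate u.length p.1) : gen p u = 0 := by
  rcases p with ⟨i, b⟩
  cases b
  · show gb i u = 0
    simp only [gb]
    rw [if_neg h]
  · show gf i u = 0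
    have h1 : u ≠ [] := fun e => h (by simp [e])
    have h2 : u ≠ [i] := fun e => h (by simp [e])
    simp [gf, h1, h2]

lemma gf_replicate (i : Fin n) (q : ℕ) :
    gf i (List.replicate q i) = if q ≤ 1 then 1 else 0 := by
  match q with
  | 0 => simp [gf]
  | 1 => simp [gf, List.replicate_succ]
  | (q+2) =>
    have h1 : List.replicate (q+2) i ≠ [] := by simp
    have h2 : List.replicate (q+2) i ≠ [i] := by
      intro h
      have := congrArg List.length h
      simp at this
    simp [gf, h1, h2]

lemma gb_replicate (i : Fin n) (q : ℕ) :
    gb i (List.replicate q i) = (-1) ^ q := by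
  simp [gb]

/-- The series of a word in the letters. -/
def Fw : List (Fin n × Bool) → Cf n
  | [] => 1
  | p :: T => gen p * Fw T

lemma Fw_cons (p : Fin n × Bool) (T : List (Fin n × Bool)) :
    Fw (p :: T) = gen p * Fw T := rfl

/-- The monomial of a word. -/
def MW (L : List (Fin n × Bool)) : List (Fin n) := L.map Prod.fst

lemma MW_nil : MW ([] : List (Fin n × Bool)) = [] := rfl
lemma MW_cons (p : Fin n × Bool) (T : List (Fin n × Bool)) : MW (p :: T) = p.1 :: MW T := rfl
lemma MW_append (L T : List (Fin n × Bool)) : MW (L ++ T) = MW L ++ MW T := List.map_append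
lemma MW_replicate (r : ℕ) (p : Fin n × Bool) :
    MW (List.replicate r p) = List.replicate r p.1 := List.map_replicate

lemma Fw_nil_coeff : ∀ L : List (Fin n × Bool), Fw L [] = 1
  | [] => rfl
  | p :: T => by
    rw [Fw_cons, Cf.mul_def]
    simp only [List.length_nil, Finset.range_one, Finset.sum_singleton, List.take_nil,
      List.drop_nil, gen_nil, Fw_nil_coeff T, one_mul]
    simp

/-- Pattern: `w` is a concatenation of powers following the letters `ls`. -/
inductive Pat : List (Fin n) → List (Fin n) → Prop
  | nil : Pat [] []
  | cons (i : Fin n) (m : ℕ) (ls w' : List (Fin n)) :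
      Pat ls w' → Pat (i :: ls) (List.replicate m i ++ w')

/-- Number of alternations, given the preceding letter. -/
def altP : Option (Fin n) → List (Fin n) → ℕ
  | _, [] => 0
  | p, a :: l => (if p = some a then 0 else 1) + altP (some a) l

lemma altP_le : ∀ (l : List (Fin n)) (p q : Option (Fin n)), altP p l ≤ 1 + altP q l := by
  intro l
  cases l with
  | nil => intro p q; simp [altP]
  | cons a l =>
    intro p q
    show (if p = some a then 0 else 1) + altP (some a) l ≤
      1 + ((if q = some a then 0 else 1) + altP (some a) l)
    have : (if p = some a then 0 else 1) ≤ 1 := by split <;> omega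
    omega

lemma altP_replicate (i : Fin n) : ∀ (m : ℕ) (w : List (Fin n)),
    altP (some i) (List.replicate m i ++ w) = altP (some i) w := by
  intro m
  induction m with
  | zero => intro w; simp
  | succ m ih =>
    intro w
    rw [List.replicate_succ, List.cons_append]
    show (if some i = some i then 0 else 1) + altP (some i) (List.replicate m i ++ w) = _
    rw [if_pos rfl, ih]
    omega

lemma altP_pat : ∀ {ls w : List (Fin n)}, Pat ls w → ∀ p, altP p w ≤ altP p ls := by
  intro ls w h
  induction h with
  | nil => intro p; simp [altP]
  | cons i m ls w' _ ih =>
    intro p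
    show altP p (List.replicate m i ++ w') ≤ (if p = some i then 0 else 1) + altP (some i) ls
    cases m with
    | zero =>
      simp only [List.replicate, List.nil_append]
      calc altP p w' ≤ altP p ls := ih p
        _ ≤ (if p = some i then 0 else 1) + altP (some i) ls := by
            by_cases hp : p = some i
            · subst hp; simp
            · rw [if_neg hp]; exact altP_le ls p (some i)
    | succ m =>
      rw [List.replicate_succ, List.cons_append]
      show (if p = some i then 0 else 1) + altP (some i) (List.replicate m i ++ w') ≤ _
      rw [altP_replicate]
      exact Nat.add_le_add_left (ih (some i)) _

lemma Fw_supp : ∀ (L : List (Fin n × Bool)) (w : List (Fin n)), Fw L w ≠ 0 → Pat (MW L) w := by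
  intro L
  induction L with
  | nil =>
    intro w h
    have : w = [] := by
      by_contra hw
      exact h (by simp [Fw, Cf.one_def, hw])
    subst this
    exact Pat.nil
  | cons p T ih =>
    intro w h
    rw [Fw_cons, Cf.mul_def] at h
    obtain ⟨s, _, hs⟩ := Finset.exists_ne_zero_of_sum_ne_zero h
    have hgen : gen p (w.take s) ≠ 0 := fun e => hs (by rw [e, zero_mul])
    have hrest : Fw T (w.drop s) ≠ 0 := fun e => hs (by rw [e, mul_zero])
    have htake : w.take s = List.replicate (w.take s).length p.1 := by
      by_contra hc
      exact hgen (gen_eq_zero hc)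
    have : w = List.replicate (w.take s).length p.1 ++ w.drop s := by
      conv_lhs => rw [← List.take_append_drop s w]
      rw [← htake]
    rw [MW_cons]
    rw [this]
    exact Pat.cons _ _ _ _ (ih _ hrest)

lemma altP_none_cons (a : Fin n) (l : List (Fin n)) :
    altP none (a :: l) = 1 + altP (some a) l := by
  show (if (none : Option (Fin n)) = some a then 0 else 1) + _ = _
  simp

/-- Vanishing: a word with an extra foreign block in front is not in the support. -/
lemma Fw_vanish (T : List (Fin n × Bool)) (j : Fin n) (p : ℕ) (hp : 1 ≤ p)
    (hT : T = [] ∨ ∃ q T', T = q :: T' ∧ q.1 ≠ j) :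
    Fw T (List.replicate p j ++ MW T) = 0 := by
  by_contra h
  have hpat := Fw_supp T _ h
  have hle := altP_pat hpat none
  -- compute LHS alternation
  obtain ⟨p', rfl⟩ : ∃ p', p = p' + 1 := ⟨p - 1, by omega⟩
  rw [List.replicate_succ, List.cons_append, altP_none_cons, altP_replicate] at hle
  rcases hT with rfl | ⟨q, T', rfl, hq⟩
  · simp [MW_nil, altP] at hle
  · rw [MW_cons] at hle
    have h1 : altP (some j) (q.1 :: MW T') = 1 + altP (some q.1) (MW T') := by
      show (if some j = some q.1 then 0 else 1) + _ = _
      rw [if_neg (by simpa [eq_comm] using hq)]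
    have h2 : altP none (q.1 :: MW T') = 1 + altP (some q.1) (MW T') := altP_none_cons _ _
    omega

/-- Reduce convolution with a leading block to a one-dimensional sum. -/
lemma conv_block (b : Bool) (j : Fin n) (G : Cf n) (T : List (Fin n × Bool)) (q : ℕ)
    (hT : T = [] ∨ ∃ p T', T = p :: T' ∧ p.1 ≠ j) :
    (gen (j, b) * G) (List.replicate q j ++ MW T)
      = ∑ s ∈ Finset.range (q + 1),
          gen (j, b) (List.replicate s j) * G (List.replicate (q - s) j ++ MW T) := by
  rw [Cf.mul_def]
  set w := List.replicate q j ++ MW T with hw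
  have hlen : w.length = q + (MW T).length := by simp [hw]
  have hsub : Finset.range (q + 1) ⊆ Finset.range (w.length + 1) := by
    intro x hx
    simp only [Finset.mem_range] at hx ⊢
    omega
  rw [← Finset.sum_subset hsub]
  · refine Finset.sum_congr rfl fun s hs => ?_
    have hsq : s ≤ q := Nat.lt_succ_iff.mp (Finset.mem_range.mp hs)
    have ht : w.take s = List.replicate s j := by
      rw [hw, List.take_append_of_le_length (by simp; omega), List.take_replicate,
        min_eq_left hsq]
    have hd : w.drop s = List.replicate (q - s) j ++ MW T := by
      rw [hw, List.drop_append_of_le_length (by simp; omega), List.drop_replicate]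
    rw [ht, hd]
  · intro s hs hs2
    simp only [Finset.mem_range] at hs hs2
    have hq : q + 1 ≤ s := by omega
    rcases hT with rfl | ⟨p, T', rfl, hp⟩
    · exfalso
      rw [MW_nil] at hlen
      simp at hlen
      omega
    · have ht : w.take s = List.replicate q j ++ (MW (p :: T')).take (s - q) := by
        rw [hw, List.take_append, List.take_replicate, min_eq_right (by omega),
          List.length_replicate]
      have hmem : p.1 ∈ w.take s := by
        rw [ht, MW_cons]
        obtain ⟨d, hd⟩ : ∃ d, s - q = d + 1 := ⟨s - q - 1, by omega⟩
        rw [hd, List.take_succ_cons]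
        exact List.mem_append_right _ List.mem_cons_self
      have hne : w.take s ≠ List.replicate (w.take s).length j := by
        intro hc
        exact hp (List.eq_of_mem_replicate (hc ▸ hmem))
      rw [gen_eq_zero hne, zero_mul]

/-- The coefficient `bin b r q` of `t_j^q` in `(1+t_j)^{±r}`. -/
def bin : Bool → ℕ → ℕ → ℤ
  | true, r, q => (r.choose q : ℤ)
  | false, r, q => (-1) ^ q * ((r - 1 + q).choose q : ℤ)

lemma choose_col_sum (r : ℕ) (hr : 1 ≤ r) :
    ∀ q : ℕ, (∑ u ∈ Finset.range (q + 1), (r - 1 + u).choose u) = (r + q).choose q := by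
  intro q
  induction q with
  | zero => simp
  | succ q ih =>
    rw [Finset.sum_range_succ, ih]
    have h1 : r - 1 + (q + 1) = r + q := by omega
    rw [h1]
    have h2 : (r + q).choose (q + 1) + (r + q).choose q = (r + (q + 1)).choose (q + 1) := by
      rw [show r + (q + 1) = (r + q) + 1 by omega, Nat.choose_succ_succ' (r + q) q]
      omega
    omega

lemma arith_true (r q : ℕ) :
    ∑ s ∈ Finset.range (q + 1), gen ((j : Fin n), true) (List.replicate s j) * bin true r (q - s)
      = bin true (r + 1) q := by
  have hgen : ∀ s, gen ((j : Fin n), true) (List.replicate s j) = if s ≤ 1 then 1 else 0 := by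
    intro s; exact gf_replicate j s
  cases q with
  | zero =>
    rw [Finset.sum_range_one, hgen, if_pos (by omega)]
    simp [bin]
  | succ q =>
    rw [Cf.sum_range_eq_two _ _ 0 1 (by omega) (by omega) (by omega)]
    · simp only [hgen]
      rw [if_pos (by omega), if_pos (by omega)]
      show 1 * bin true r (q + 1) + 1 * bin true r (q + 1 - 1) = bin true (r + 1) (q + 1)
      simp only [bin, Nat.add_sub_cancel]
      rw [Nat.choose_succ_succ' r q]
      push_cast
      ring
    · intro s hs hs0 hs1
      rw [hgen, if_neg (by omega), zero_mul]

lemma arith_false (r q : ℕ) (hr : 1 ≤ r) :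
    ∑ s ∈ Finset.range (q + 1), gen ((j : Fin n), false) (List.replicate s j) * bin false r (q - s)
      = bin false (r + 1) q := by
  have hgen : ∀ s, gen ((j : Fin n), false) (List.replicate s j) = (-1) ^ s := by
    intro s; exact gb_replicate j s
  have hterm : ∀ s ∈ Finset.range (q + 1),
      gen ((j : Fin n), false) (List.replicate s j) * bin false r (q - s)
        = (-1) ^ q * ((r - 1 + (q - s)).choose (q - s) : ℤ) := by
    intro s hs
    have hsq : s ≤ q := by
      have := Finset.mem_range.mp hs; omega
    rw [hgen]
    show ((-1 : ℤ)) ^ s * ((-1) ^ (q - s) * _) = _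
    rw [← mul_assoc, ← pow_add]
    congr 2
    omega
  rw [Finset.sum_congr rfl hterm, ← Finset.mul_sum]
  have hrefl : (∑ s ∈ Finset.range (q + 1), ((r - 1 + (q - s)).choose (q - s) : ℤ))
      = ∑ u ∈ Finset.range (q + 1), ((r - 1 + u).choose u : ℤ) := by
    rw [← Finset.sum_range_reflect]
    refine Finset.sum_congr rfl fun s hs => ?_
    have hsq : s ≤ q := by
      have := Finset.mem_range.mp hs; omega
    congr 2 <;> omega
  rw [hrefl]
  have := choose_col_sum r hr q
  show ((-1 : ℤ)) ^ q * _ = ((-1 : ℤ)) ^ q * ((r + 1 - 1 + q).choose q : ℤ)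
  rw [show r + 1 - 1 = r by omega]
  push_cast [← this]
  ring

/-- The key computation: coefficient of `t_j^q ⬝ M(T)` in `(1±t_j)^{±r} F(T)`. -/
lemma main_lemma : ∀ (r : ℕ) (b : Bool) (j : Fin n) (T : List (Fin n × Bool)) (q : ℕ),
    1 ≤ r → (T = [] ∨ ∃ p T', T = p :: T' ∧ p.1 ≠ j) →
    Fw (List.replicate r (j, b) ++ T) (List.replicate q j ++ MW T)
      = bin b r q * Fw T (MW T) := by
  intro r
  induction r with
  | zero => intro b j T q h; omega
  | succ r ih =>
    intro b j T q _ hT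
    rw [List.replicate_succ, List.cons_append, Fw_cons, conv_block b j _ T q hT]
    rcases Nat.eq_zero_or_pos r with rfl | hr
    · -- base case r+1 = 1
      simp only [List.replicate, List.nil_append]
      rw [Finset.sum_eq_single q]
      · rw [Nat.sub_self]
        simp only [List.replicate, List.nil_append]
        cases b
        · rw [show gen (j, false) (List.replicate q j) = (-1) ^ q from gb_replicate j q]
          show _ = ((-1 : ℤ)) ^ q * ((1 - 1 + q).choose q : ℤ) * _
          rw [show (1 : ℕ) - 1 + q = q by omega, Nat.choose_self]
          push_cast
          ring
        · rw [show gen (j, true) (List.replicate q j) = if q ≤ 1 then 1 else 0 from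
            gf_replicate j q]
          show _ = ((1 : ℕ).choose q : ℤ) * _
          by_cases hq : q ≤ 1
          · rw [if_pos hq]
            interval_cases q <;> simp
          · rw [if_neg hq, Nat.choose_eq_zero_of_lt (by omega)]
            simp
      · intro s hs hsq
        have hsle : s ≤ q := Nat.lt_succ_iff.mp (Finset.mem_range.mp hs)
        rw [Fw_vanish T j (q - s) (by omega) hT, mul_zero]
      · intro h
        exact absurd (Finset.self_mem_range_succ q) h
    · -- inductive step
      have hstep : ∀ s ∈ Finset.range (q + 1),
          gen (j, b) (List.replicate s j)
              * Fw (List.replicate r (j, b) ++ T) (List.replicate (q - s) j ++ MW T)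
            = gen (j, b) (List.replicate s j) * bin b r (q - s) * Fw T (MW T) := by
        intro s hs
        rw [ih b j T (q - s) hr hT, mul_assoc]
      rw [Finset.sum_congr rfl hstep, ← Finset.sum_mul]
      cases b
      · rw [arith_false r q hr]
      · rw [arith_true r q]

/-- A reduced word (no adjacent cancelling pair). -/
def Reduced (L : List (Fin n × Bool)) : Prop :=
  ∀ (L₂ L₃ : List (Fin n × Bool)) (x : Fin n) (b : Bool), L ≠ L₂ ++ (x, b) :: (x, !b) :: L₃

lemma Reduced.of_append {X T : List (Fin n × Bool)} (h : Reduced (X ++ T)) : Reduced T := by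
  intro L₂ L₃ x b hEq
  exact h (X ++ L₂) L₃ x b (by rw [hEq, List.append_assoc])

/-- Sign of a word. -/
def eps (L : List (Fin n × Bool)) : ℤ := (-1) ^ (L.countP (fun p => !p.2))

lemma eps_append (X T : List (Fin n × Bool)) : eps (X ++ T) = eps X * eps T := by
  rw [eps, eps, eps, List.countP_append, pow_add]

lemma dropWhile_head_not (pred : (Fin n × Bool) → Bool) :
    ∀ (l : List (Fin n × Bool)) (q : Fin n × Bool) (T' : List (Fin n × Bool)),
      l.dropWhile pred = q :: T' → pred q = false := by
  intro l
  induction l with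
  | nil => intro q T' h; simp [List.dropWhile] at h
  | cons a l ih =>
    intro q T' h
    rw [List.dropWhile_cons] at h
    by_cases ha : pred a = true
    · rw [if_pos ha] at h
      exact ih q T' h
    · rw [if_neg ha] at h
      injection h with h1 _
      rw [← h1]
      simpa using ha

lemma pos_main : ∀ (N : ℕ) (L : List (Fin n × Bool)), L.length ≤ N → Reduced L →
    0 < eps L * Fw L (MW L) := by
  intro N
  induction N with
  | zero =>
    intro L hL _
    have : L = [] := List.length_eq_zero_iff.mp (by omega)
    subst this
    simp [eps, Fw, MW_nil, Cf.one_def]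
  | succ N ihN =>
    intro L hL hred
    rcases L with _ | ⟨p, L'⟩
    · simp [eps, Fw, MW_nil, Cf.one_def]
    set pred : (Fin n × Bool) → Bool := fun x => decide (x = p) with hpred
    set tk := (p :: L').takeWhile pred with htk
    set T := (p :: L').dropWhile pred with hT
    have hsplit : tk ++ T = p :: L' := List.takeWhile_append_dropWhile
    have htkrep : tk = List.replicate tk.length p := by
      apply List.eq_replicate_of_mem
      intro x hx
      have := List.mem_takeWhile_imp (htk ▸ hx)
      simpa [hpred] using this
    have hr1 : 1 ≤ tk.length := by
      have : tk = p :: L'.takeWhile pred := by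
        rw [htk, List.takeWhile_cons_of_pos (by simp [hpred])]
      rw [this]
      simp
    have hTcase : T = [] ∨ ∃ q' T', T = q' :: T' ∧ q'.1 ≠ p.1 := by
      rcases hTc : T with _ | ⟨q', T'⟩
      · exact Or.inl rfl
      · refine Or.inr ⟨q', T', rfl, ?_⟩
        have hq'pred : pred q' = false :=
          dropWhile_head_not pred (p :: L') q' T' (hT ▸ hTc)
        have hq'ne : q' ≠ p := by
          intro h
          rw [h] at hq'pred
          simp [hpred] at hq'pred
        intro hq1
        have hq2 : q'.2 = !p.2 := by
          by_cases h2 : q'.2 = p.2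
          · exact absurd (Prod.ext hq1 h2) hq'ne
          · exact Bool.eq_not_of_ne h2
        -- contradiction with reducedness
        obtain ⟨m, hm⟩ : ∃ m, tk.length = m + 1 := ⟨tk.length - 1, by omega⟩
        have hrepr : tk = List.replicate m p ++ [p] := by
          conv_lhs => rw [htkrep]
          rw [hm, ← List.replicate_succ']
        have hq' : q' = (p.1, !p.2) := Prod.ext hq1 hq2
        refine hred (List.replicate m p) T' p.1 p.2 ?_
        rw [← hsplit, hTc, hq', hrepr, List.append_assoc]
        rfl
    -- replace tk by an opaque replicate length
    obtain ⟨r, hr⟩ : ∃ r, r = tk.length := ⟨tk.length, rfl⟩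
    have hsplit' : p :: L' = List.replicate r p ++ T := by
      rw [hr, ← htkrep, hsplit]
    have hr1' : 1 ≤ r := hr ▸ hr1
    -- apply the main lemma
    have hpair : (p.1, p.2) = p := rfl
    have hmain := main_lemma r p.2 p.1 T r hr1' hTcase
    rw [hpair] at hmain
    have hMWL : MW (p :: L') = List.replicate r p.1 ++ MW T := by
      rw [hsplit', MW_append, MW_replicate]
    have hFwL : Fw (p :: L') (MW (p :: L')) = bin p.2 r r * Fw T (MW T) := by
      rw [hMWL]
      conv_lhs => rw [hsplit']
      exact hmain
    have hepsL : eps (p :: L') = eps (List.replicate r p) * eps T := by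
      rw [hsplit', eps_append]
    have hredT : Reduced T := by
      have h2 : Reduced (List.replicate r p ++ T) := by rw [← hsplit']; exact hred
      exact h2.of_append
    have hlenT : T.length ≤ N := by
      have h1 : L'.length + 1 = r + T.length := by
        simpa using congrArg List.length hsplit'
      have h2 : L'.length + 1 ≤ N + 1 := by simpa using hL
      omega
    have hIH : 0 < eps T * Fw T (MW T) := ihN T hlenT hredT
    rw [hepsL, hFwL]
    have hepstk : eps (List.replicate r p) = if p.2 then 1 else (-1) ^ r := by
      rw [eps, List.countP_replicate]
      rcases p with ⟨p1, p2⟩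
      cases p2 <;> simp
    cases hb : p.2
    · -- negative block
      rw [hepstk, hb, if_neg (by simp)]
      show 0 < (-1 : ℤ) ^ r * eps T *
        ((-1) ^ r * ((r - 1 + r).choose r : ℤ) * Fw T (MW T))
      have hc : (0 : ℤ) < ((r - 1 + r).choose r : ℤ) := by
        exact_mod_cast Nat.choose_pos (by omega)
      have hsq : ((-1 : ℤ) ^ r) * ((-1 : ℤ) ^ r) = 1 := by
        rw [← pow_add]
        exact Even.neg_one_pow ⟨r, by ring⟩
      have key : (-1 : ℤ) ^ r * eps T *
          ((-1) ^ r * ((r - 1 + r).choose r : ℤ) * Fw T (MW T))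
          = ((-1 : ℤ) ^ r * (-1 : ℤ) ^ r) *
            (((r - 1 + r).choose r : ℤ) * (eps T * Fw T (MW T))) := by
        ring
      rw [key, hsq, one_mul]
      exact mul_pos hc hIH
    · -- positive block
      rw [hepstk, hb, if_pos rfl]
      show 0 < 1 * eps T * ((r.choose r : ℤ) * Fw T (MW T))
      rw [Nat.choose_self]
      simpa using hIH

/-! ### The Magnus homomorphism and its injectivity -/

/-- The Magnus homomorphism `F_n → (Cf n)ˣ`, `x_i ↦ 1 + t_i`. -/
def magnus (n : ℕ) : FreeGroup (Fin n) →* (Cf n)ˣ := FreeGroup.lift fun i => U i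

lemma magnus_mk (L : List (Fin n × Bool)) :
    ((magnus n (FreeGroup.mk L) : (Cf n)ˣ) : Cf n) = Fw L := by
  rw [magnus, FreeGroup.lift_mk]
  induction L with
  | nil => rfl
  | cons p T ih =>
    rw [List.map_cons, List.prod_cons, Units.val_mul, ih, Fw_cons]
    congr 1
    rcases p with ⟨i, b⟩
    cases b <;> rfl

lemma magnus_const (x : FreeGroup (Fin n)) : ((magnus n x : (Cf n)ˣ) : Cf n) [] = 1 := by
  conv_lhs => rw [← FreeGroup.mk_toWord (x := x)]
  rw [magnus_mk, Fw_nil_coeff]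

lemma reduced_toWord (x : FreeGroup (Fin n)) : Reduced (x.toWord) := by
  intro L₂ L₃ a b h
  have h2 : FreeGroup.reduce x.toWord = L₂ ++ (a, b) :: (a, !b) :: L₃ := by
    rw [FreeGroup.reduce_toWord]; exact h
  exact FreeGroup.reduce.not h2

lemma magnus_injective : Function.Injective (magnus n) := by
  rw [injective_iff_map_eq_one]
  intro x hx
  by_contra hne
  have hW : x.toWord ≠ [] := fun e => hne (FreeGroup.toWord_eq_nil_iff.mp e)
  have hpos := pos_main (n := n) x.toWord.length x.toWord le_rfl (reduced_toWord x)
  have hval : Fw x.toWord = ((1 : (Cf n)ˣ) : Cf n) := by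
    rw [← magnus_mk, FreeGroup.mk_toWord, hx]
  rw [hval] at hpos
  have hMW : MW x.toWord ≠ [] := by simpa [MW] using hW
  rw [show ((1 : (Cf n)ˣ) : Cf n) (MW x.toWord) = 0 from by
    show (1 : Cf n) _ = 0
    simp [Cf.one_def, hMW]] at hpos
  simp at hpos

/-! ### Positive cone and the bi-invariant order -/

/-- `v` is deg-lex smaller than `w`. -/
def klt (v w : List (Fin n)) : Prop :=
  v.length < w.length ∨ (v.length = w.length ∧ v < w)

lemma klt_trans {u v w : List (Fin n)} (h1 : klt u v) (h2 : klt v w) : klt u w := by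
  rcases h1 with h1 | ⟨h1, h1'⟩ <;> rcases h2 with h2 | ⟨h2, h2'⟩
  · exact Or.inl (by omega)
  · exact Or.inl (by omega)
  · exact Or.inl (by omega)
  · exact Or.inr ⟨by omega, lt_trans h1' h2'⟩

lemma klt_total {v w : List (Fin n)} (h : v ≠ w) : klt v w ∨ klt w v := by
  rcases Nat.lt_trichotomy v.length w.length with h1 | h1 | h1
  · exact Or.inl (Or.inl h1)
  · rcases lt_or_gt_of_ne h with h2 | h2
    · exact Or.inl (Or.inr ⟨h1, h2⟩)
    · exact Or.inr (Or.inr ⟨h1.symm, h2⟩)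
  · exact Or.inr (Or.inl h1)

lemma klt_length {v w : List (Fin n)} (h : klt v w) : v.length ≤ w.length := by
  rcases h with h | ⟨h, _⟩ <;> omega

/-- Positivity: the deg-lex least nonzero coefficient is positive. -/
def Pos (d : Cf n) : Prop := ∃ w, 0 < d w ∧ ∀ v, klt v w → d v = 0

lemma Pos.add {d e : Cf n} (hd : Pos d) (he : Pos e) : Pos (d + e) := by
  obtain ⟨w1, h1, m1⟩ := hd
  obtain ⟨w2, h2, m2⟩ := he
  by_cases hw : w1 = w2
  · subst hw
    exact ⟨w1, by show 0 < d w1 + e w1; omega,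
      fun v hv => by show d v + e v = 0; rw [m1 v hv, m2 v hv]; ring⟩
  · rcases klt_total hw with h | h
    · refine ⟨w1, ?_, fun v hv => ?_⟩
      · show 0 < d w1 + e w1
        rw [m2 w1 h]
        omega
      · show d v + e v = 0
        rw [m1 v hv, m2 v (klt_trans hv h)]
        ring
    · refine ⟨w2, ?_, fun v hv => ?_⟩
      · show 0 < d w2 + e w2
        rw [m1 w2 h]
        omega
      · show d v + e v = 0
        rw [m1 v (klt_trans hv h), m2 v hv]
        ring

lemma not_pos_zero : ¬ Pos (0 : Cf n) := by
  rintro ⟨w, h, -⟩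
  exact lt_irrefl 0 h

lemma pos_or_neg {d : Cf n} (hd : d ≠ 0) : Pos d ∨ Pos (-d) := by
  have hex : ∃ w, d w ≠ 0 := by
    by_contra h
    push_neg at h
    exact hd (funext fun w => h w)
  have hexl : ∃ ℓ, ∃ w : List (Fin n), w.length = ℓ ∧ d w ≠ 0 := by
    obtain ⟨w, hw⟩ := hex
    exact ⟨w.length, w, rfl, hw⟩
  classical
  let ℓ := Nat.find hexl
  obtain ⟨w1, hw1l, hw1⟩ := Nat.find_spec hexl
  have hfin : {w : List (Fin n) | w.length = ℓ ∧ d w ≠ 0}.Finite :=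
    (List.finite_length_eq (Fin n) ℓ).subset fun w hw => hw.1
  have hne : hfin.toFinset.Nonempty := ⟨w1, by simp [Set.Finite.mem_toFinset]; exact ⟨hw1l, hw1⟩⟩
  set w0 := hfin.toFinset.min' hne with hw0
  have hw0mem : w0 ∈ hfin.toFinset := Finset.min'_mem _ _
  rw [Set.Finite.mem_toFinset] at hw0mem
  obtain ⟨hw0l, hw0ne⟩ := hw0mem
  have hmin : ∀ v, klt v w0 → d v = 0 := by
    intro v hv
    by_contra hvne
    rcases hv with hv | ⟨hv, hv'⟩
    · rw [hw0l] at hv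
      exact Nat.find_min hexl hv ⟨v, rfl, hvne⟩
    · have hvmem : v ∈ hfin.toFinset := by
        rw [Set.Finite.mem_toFinset]
        exact ⟨by omega, hvne⟩
      have := Finset.min'_le _ _ hvmem
      rw [← hw0] at this
      exact absurd hv' (not_lt.mpr this)
  rcases lt_or_gt_of_ne hw0ne.symm with h | h
  · exact Or.inl ⟨w0, h, hmin⟩
  · refine Or.inr ⟨w0, ?_, fun v hv => ?_⟩
    · show 0 < -(d w0); omega
    · show -(d v) = 0
      rw [hmin v hv]
      ring

lemma pos_mul_left (f : Cf n) {d : Cf n} (hf : f [] = 1) (hd : Pos d) : Pos (f * d) := by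
  obtain ⟨w0, h0, hmin⟩ := hd
  have key : ∀ w : List (Fin n), w.length ≤ w0.length → (f * d) w = d w := by
    intro w hw
    rw [Cf.mul_def]
    rw [Finset.sum_eq_single 0]
    · rw [List.take_zero, List.drop_zero, hf, one_mul]
    · intro s hs hs0
      have hsl : s ≤ w.length := Nat.lt_succ_iff.mp (Finset.mem_range.mp hs)
      have : d (w.drop s) = 0 := by
        apply hmin
        exact Or.inl (by rw [List.length_drop]; omega)
      rw [this, mul_zero]
    · intro h
      exact absurd (Finset.mem_range.mpr (by omega)) h
  refine ⟨w0, ?_, fun v hv => ?_⟩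
  · rw [key w0 le_rfl]; exact h0
  · rw [key v (le_trans (klt_length hv) le_rfl)]
    exact hmin v hv

lemma pos_mul_right {d : Cf n} (f : Cf n) (hf : f [] = 1) (hd : Pos d) : Pos (d * f) := by
  obtain ⟨w0, h0, hmin⟩ := hd
  have key : ∀ w : List (Fin n), w.length ≤ w0.length → (d * f) w = d w := by
    intro w hw
    rw [Cf.mul_def]
    rw [Finset.sum_eq_single w.length]
    · rw [List.take_length, List.drop_length, hf, mul_one]
    · intro s hs hs0
      have hsl : s ≤ w.length := Nat.lt_succ_iff.mp (Finset.mem_range.mp hs)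
      have : d (w.take s) = 0 := by
        apply hmin
        exact Or.inl (by rw [List.length_take]; omega)
      rw [this, zero_mul]
    · intro h
      exact absurd (Finset.mem_range.mpr (by omega)) h
  refine ⟨w0, ?_, fun v hv => ?_⟩
  · rw [key w0 le_rfl]; exact h0
  · rw [key v (le_trans (klt_length hv) le_rfl)]
    exact hmin v hv

lemma mul_sub_cf (f g h : Cf n) : f * (g - h) = f * g - f * h := by
  funext w
  show _ = (f * g) w - (f * h) w
  rw [Cf.mul_def, Cf.mul_def, Cf.mul_def, ← Finset.sum_sub_distrib]
  refine Finset.sum_congr rfl fun s _ => ?_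
  show f _ * (g _ - h _) = _
  ring

lemma sub_mul_cf (f g h : Cf n) : (f - g) * h = f * h - g * h := by
  funext w
  show _ = (f * h) w - (g * h) w
  rw [Cf.mul_def, Cf.mul_def, Cf.mul_def, ← Finset.sum_sub_distrib]
  refine Finset.sum_congr rfl fun s _ => ?_
  show (f _ - g _) * h _ = _
  ring

lemma sub_add_sub_cf (x y z : Cf n) : (y - x) + (z - y) = z - x := by
  funext w
  show (y w - x w) + (z w - y w) = z w - x w
  ring

lemma neg_sub_cf (x y : Cf n) : -(y - x) = x - y := by
  funext w
  show -(y w - x w) = x w - y w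
  ring

lemma sub_self_cf (x : Cf n) : x - x = 0 := by
  funext w
  show x w - x w = 0
  ring

/-! ### Units of the group algebra are trivial -/

lemma units_trivial (u v : MonoidAlgebra ℂ (FreeGroup (Fin n)))
    (huv : u * v = 1) (hvu : v * u = 1) :
    ∃ (c : ℂ) (g : FreeGroup (Fin n)), c ≠ 0 ∧ u = MonoidAlgebra.single g c := by
  classical
  set μ := magnus n with hμ
  set flt : FreeGroup (Fin n) → FreeGroup (Fin n) → Prop :=
    fun a b => Pos (((μ b : (Cf n)ˣ) : Cf n) - ((μ a : (Cf n)ˣ) : Cf n)) with hflt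
  have hsub_zero : ∀ a : FreeGroup (Fin n),
      ((μ a : (Cf n)ˣ) : Cf n) - ((μ a : (Cf n)ˣ) : Cf n) = 0 := by
    intro a
    funext w
    show ((μ a : (Cf n)ˣ) : Cf n) w - ((μ a : (Cf n)ˣ) : Cf n) w = 0
    ring
  have hirr : ∀ a, ¬ flt a a := by
    intro a h
    rw [hflt] at h
    rw [hsub_zero a] at h
    exact not_pos_zero h
  have htrans : ∀ a b c, flt a b → flt b c → flt a c := by
    intro a b c h1 h2
    have hsum := Pos.add h1 h2
    rw [sub_add_sub_cf] at hsum
    exact hsum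
  have htri : ∀ a b, flt a b ∨ a = b ∨ flt b a := by
    intro a b
    by_cases hab : a = b
    · exact Or.inr (Or.inl hab)
    · have hne : ((μ b : (Cf n)ˣ) : Cf n) - ((μ a : (Cf n)ˣ) : Cf n) ≠ 0 := by
        intro h0
        apply hab
        apply magnus_injective (n := n)
        apply Units.ext
        funext w
        have h1 := congrFun h0 w
        have h2 : ((μ b : (Cf n)ˣ) : Cf n) w - ((μ a : (Cf n)ˣ) : Cf n) w = 0 := h1
        have : ((μ a : (Cf n)ˣ) : Cf n) w = ((μ b : (Cf n)ˣ) : Cf n) w := by omega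
        exact this
      rcases pos_or_neg hne with h | h
      · exact Or.inl h
      · right; right
        rw [neg_sub_cf] at h
        exact h
  have hconst : ∀ a : FreeGroup (Fin n), ((μ a : (Cf n)ˣ) : Cf n) [] = 1 := magnus_const
  have hmul_right : ∀ {a b : FreeGroup (Fin n)} (c : FreeGroup (Fin n)),
      flt a b → flt (a * c) (b * c) := by
    intro a b c h
    show Pos _
    have heq : ((μ (b * c) : (Cf n)ˣ) : Cf n) - ((μ (a * c) : (Cf n)ˣ) : Cf n)
        = (((μ b : (Cf n)ˣ) : Cf n) - ((μ a : (Cf n)ˣ) : Cf n)) * ((μ c : (Cf n)ˣ) : Cf n) := by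
      rw [map_mul, map_mul, Units.val_mul, Units.val_mul, sub_mul_cf]
    rw [heq]
    exact pos_mul_right _ (hconst c) h
  have hmul_left : ∀ {a b : FreeGroup (Fin n)} (c : FreeGroup (Fin n)),
      flt a b → flt (c * a) (c * b) := by
    intro a b c h
    show Pos _
    have heq : ((μ (c * b) : (Cf n)ˣ) : Cf n) - ((μ (c * a) : (Cf n)ˣ) : Cf n)
        = ((μ c : (Cf n)ˣ) : Cf n) * (((μ b : (Cf n)ˣ) : Cf n) - ((μ a : (Cf n)ˣ) : Cf n)) := by
      rw [map_mul, map_mul, Units.val_mul, Units.val_mul, mul_sub_cf]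
    rw [heq]
    exact pos_mul_left _ (hconst c) h
  have hflt_ne : ∀ {a b : FreeGroup (Fin n)}, flt a b → a ≠ b := by
    intro a b h heq
    rw [heq] at h
    exact hirr b h
  -- nonzero supports
  have hu0 : u ≠ 0 := by
    rintro rfl
    rw [zero_mul] at huv
    exact one_ne_zero huv.symm
  have hv0 : v ≠ 0 := by
    rintro rfl
    rw [zero_mul] at hvu
    exact one_ne_zero hvu.symm
  have hus : u.coeff.support.Nonempty := Finsupp.support_nonempty_iff.mpr (fun h => hu0 (MonoidAlgebra.coeff_eq_zero.mp h))
  have hvs : v.coeff.support.Nonempty := Finsupp.support_nonempty_iff.mpr (fun h => hv0 (MonoidAlgebra.coeff_eq_zero.mp h))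
  -- the key coefficient extraction
  have key : ∀ a' b' : FreeGroup (Fin n), a' ∈ u.coeff.support → b' ∈ v.coeff.support →
      (∀ a ∈ u.coeff.support, ∀ b ∈ v.coeff.support, ¬(a = a' ∧ b = b') → a * b ≠ a' * b') →
      a' * b' = 1 := by
    intro a' b' ha' hb' hdiff
    have hco : (u * v).coeff (a' * b')
        = ∑ a ∈ u.coeff.support, ∑ b ∈ v.coeff.support, if a * b = a' * b' then u.coeff a * v.coeff b else 0 := by
      rw [MonoidAlgebra.coeff_mul]
      rfl
    rw [Finset.sum_eq_single a'] at hco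
    · rw [Finset.sum_eq_single b'] at hco
      · rw [if_pos rfl] at hco
        have h1 : (u * v).coeff (a' * b') ≠ 0 := by
          rw [hco]
          exact mul_ne_zero (Finsupp.mem_support_iff.mp ha') (Finsupp.mem_support_iff.mp hb')
        rw [huv] at h1
        rw [MonoidAlgebra.one_def, MonoidAlgebra.coeff_single, Finsupp.single_apply] at h1
        by_contra hne
        rw [if_neg (fun e => hne e.symm)] at h1
        exact h1 rfl
      · intro b hb hbne
        rw [if_neg (hdiff a' ha' b hb (fun e => hbne e.2))]
      · intro h
        exact absurd hb' h
    · intro a ha hane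
      apply Finset.sum_eq_zero
      intro b hb
      rw [if_neg (hdiff a ha b hb (fun e => hane e.1))]
    · intro h
      exact absurd ha' h
  -- instantiate at max and min
  letI : DecidableRel flt := fun a b => Classical.propDecidable _
  letI hsto : IsStrictTotalOrder (FreeGroup (Fin n)) flt :=
    { irrefl := hirr, trans := htrans, trichotomous := fun a b h1 h2 => ((htri a b).resolve_left h1).resolve_right h2 }
  letI lo : LinearOrder (FreeGroup (Fin n)) := linearOrderOfSTO flt
  have hle_iff : ∀ a b : FreeGroup (Fin n), a ≤ b ↔ (a = b ∨ flt a b) := fun a b => Iff.rfl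
  set a0 := u.coeff.support.max' hus with ha0
  set a1 := u.coeff.support.min' hus with ha1
  set b0 := v.coeff.support.max' hvs with hb0
  set b1 := v.coeff.support.min' hvs with hb1
  have hmax : a0 * b0 = 1 := by
    apply key a0 b0 (u.coeff.support.max'_mem hus) (v.coeff.support.max'_mem hvs)
    intro a ha b hb hne heq
    by_cases haa : a = a0
    · have hbb : b ≠ b0 := fun e => hne ⟨haa, e⟩
      have hbl : flt b b0 := ((hle_iff b b0).mp (Finset.le_max' _ _ hb)).resolve_left hbb
      have h2 : a * b = a * b0 := by rw [heq, haa]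
      exact hflt_ne (hmul_left a hbl) h2
    · have hal : flt a a0 := ((hle_iff a a0).mp (Finset.le_max' _ _ ha)).resolve_left haa
      have h1 : flt (a * b) (a0 * b) := hmul_right b hal
      by_cases hbb : b = b0
      · subst hbb
        exact hflt_ne h1 heq
      · have hbl : flt b b0 := ((hle_iff b b0).mp (Finset.le_max' _ _ hb)).resolve_left hbb
        exact hflt_ne (htrans _ _ _ h1 (hmul_left a0 hbl)) heq
  have hmin : a1 * b1 = 1 := by
    apply key a1 b1 (u.coeff.support.min'_mem hus) (v.coeff.support.min'_mem hvs)
    intro a ha b hb hne heq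
    by_cases haa : a = a1
    · have hbb : b ≠ b1 := fun e => hne ⟨haa, e⟩
      have hbl : flt b1 b := ((hle_iff b1 b).mp (Finset.min'_le _ _ hb)).resolve_left
        (fun e => hbb e.symm)
      have h2 : a * b = a * b1 := by rw [heq, haa]
      exact (hflt_ne (hmul_left a hbl)) h2.symm
    · have hal : flt a1 a := ((hle_iff a1 a).mp (Finset.min'_le _ _ ha)).resolve_left
        (fun e => haa e.symm)
      have h1 : flt (a1 * b) (a * b) := hmul_right b hal
      by_cases hbb : b = b1
      · subst hbb
        exact (hflt_ne h1) heq.symm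
      · have hbl : flt b1 b := ((hle_iff b1 b).mp (Finset.min'_le _ _ hb)).resolve_left
          (fun e => hbb e.symm)
        exact (hflt_ne (htrans _ _ _ (hmul_left a1 hbl) h1)) heq.symm
  -- conclude a0 = a1
  have ha01 : a1 = a0 := by
    by_contra hne
    have hle : a1 ≤ a0 := Finset.min'_le _ _ (u.coeff.support.max'_mem hus)
    have hal : flt a1 a0 := ((hle_iff a1 a0).mp hle).resolve_left hne
    have h1 : flt (a1 * b1) (a0 * b1) := hmul_right b1 hal
    have h2 : flt (a1 * b1) (a0 * b0) := by
      by_cases hbb : b1 = b0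
      · rw [← hbb]; exact h1
      · have hble : b1 ≤ b0 := Finset.min'_le _ _ (v.coeff.support.max'_mem hvs)
        have hbl : flt b1 b0 := ((hle_iff b1 b0).mp hble).resolve_left hbb
        exact htrans _ _ _ h1 (hmul_left a0 hbl)
    rw [hmin, hmax] at h2
    exact hirr 1 h2
  have hsupp : u.coeff.support = {a0} := by
    apply Finset.eq_singleton_iff_unique_mem.mpr
    refine ⟨u.coeff.support.max'_mem hus, fun x hx => ?_⟩
    have h1 : x ≤ a0 := Finset.le_max' _ _ hx
    have h2 : a0 ≤ x := ha01 ▸ Finset.min'_le _ _ hx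
    exact le_antisymm h1 h2
  have := Finsupp.support_eq_singleton.mp hsupp
  exact ⟨u.coeff a0, a0, this.1, by rw [← MonoidAlgebra.coeff_inj, MonoidAlgebra.coeff_single]; exact this.2⟩

end MagnusAux

/-- Units of the group algebra `ℂ[F_n]` of the free group on `n` generators are trivial:
`u` is a unit iff `u = c · g` for some `c ∈ ℂ^×` and `g ∈ F_n` (key observation in the proof
of Lemma 3.4). -/
theorem isUnit_monoidAlgebra_freeGroup_iff
    (n : ℕ) (hn : 1 ≤ n) (u : MonoidAlgebra ℂ (FreeGroup (Fin n))) :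
    IsUnit u ↔ ∃ (c : ℂ) (g : FreeGroup (Fin n)), c ≠ 0 ∧ u = MonoidAlgebra.single g c := by
  constructor
  · intro hu
    obtain ⟨U0, rfl⟩ := hu
    exact MagnusAux.units_trivial (U0 : MonoidAlgebra ℂ (FreeGroup (Fin n))) (↑U0⁻¹)
      U0.mul_inv U0.inv_mul
  · rintro ⟨c, g, hc, rfl⟩
    refine ⟨⟨MonoidAlgebra.single g c, MonoidAlgebra.single g⁻¹ c⁻¹, ?_, ?_⟩, rfl⟩
    · rw [MonoidAlgebra.single_mul_single, mul_inv_cancel, mul_inv_cancel₀ hc,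
        MonoidAlgebra.one_def]
    · rw [MonoidAlgebra.single_mul_single, inv_mul_cancel, inv_mul_cancel₀ hc,
        MonoidAlgebra.one_def]
end
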